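/- arXiv:2505.17300 — 5 statements merged into one kernel-verified Lean document; each statement's English description precedes it below -/
import Mathlib

section
/- Let α ∈ (0,1], B = ⌈log₂(2/α)⌉ and B' = ⌊log₂(2/α)⌋. Let B* be a random variable taking values in {B', B} with P(B* = B) = 2 − 2^{B−1}α. Fix θ₀ ∈ ℝ and Δ ∈ [0, 1/2]. Suppose that for each b ∈ {B', B} there are real-valued random variables θ̂^{(b,1)}, …, θ̂^{(b,b)} that are mutually independent, independent of B*, and each has median bias about θ₀ at most Δ. Then P( θ₀ ∉ [ min_{1≤j≤B*} θ̂^{(B*,j)}, max_{1≤j≤B*} θ̂^{(B*,j)} ] ) ≤ α (1 + 2 (B Δ)² e^{2 B Δ}). -/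
/-!
On the event `B* = b`, the HulC interval misses `θ₀` only if all `b` estimators lie strictly on
one side of `θ₀`. Median bias at most `Δ` gives `P(θ̂ < θ₀), P(θ̂ > θ₀) ≤ 1/2 + Δ`, and the two
probabilities sum to at most `1`; with independence, a one-sided sample has probability at most
`(1/2 + Δ)^b + (1/2 - Δ)^b = 2^{-b} ((1 + 2Δ)^b + (1 - 2Δ)^b) ≤ 2^{-b} (2 + (2bΔ)² e^{2bΔ})`,
the last step by second-order expansion of both powers.
Since `B*` is independent of the estimators, averaging over its law yields the factor
`P(B* = B) 2^{-B} + P(B* = B') 2^{-B'} = α / 2`, which is what the randomisation of `B*` achieves.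
-/

open MeasureTheory ProbabilityTheory

/-- The median bias of a real-valued random variable `X` about a point `θ`:
`(1/2 − min(P(X ≤ θ), P(X ≥ θ)))₊`. -/
noncomputable def medBias {Ω : Type*} [MeasurableSpace Ω] (P : Measure Ω)
    (X : Ω → ℝ) (θ : ℝ) : ℝ :=
  max (1 / 2 - min (P {ω | X ω ≤ θ}).toReal (P {ω | θ ≤ X ω}).toReal) 0

open Set Real

theorem Finset.prod_add_prod_le_pow_add_one_sub_pow {ι : Type*} (F : Finset ι) {c : ℝ}
    (hc : 1 / 2 ≤ c) (hc1 : c ≤ 1) {s t : ι → ℝ} (hs : ∀ i, 0 ≤ s i) (ht : ∀ i, 0 ≤ t i)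
    (hsc : ∀ i, s i ≤ c) (htc : ∀ i, t i ≤ c) (hst : ∀ i, s i + t i ≤ 1) :
    ∏ i ∈ F, s i + ∏ i ∈ F, t i ≤ c ^ F.card + (1 - c) ^ F.card := by
  classical
  induction F using Finset.induction with
  | empty => norm_num
  | @insert a F ha ih =>
    rw [Finset.prod_insert ha, Finset.prod_insert ha, Finset.card_insert_of_notMem ha,
      pow_succ', pow_succ']
    have hS : ∏ i ∈ F, s i ≤ c ^ F.card :=
      (Finset.prod_le_prod (fun i _ ↦ hs i) fun i _ ↦ hsc i).trans_eq (Finset.prod_const c)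
    have hT : ∏ i ∈ F, t i ≤ c ^ F.card :=
      (Finset.prod_le_prod (fun i _ ↦ ht i) fun i _ ↦ htc i).trans_eq (Finset.prod_const c)
    have hS0 : 0 ≤ ∏ i ∈ F, s i := Finset.prod_nonneg fun i _ ↦ hs i
    have hT0 : 0 ≤ ∏ i ∈ F, t i := Finset.prod_nonneg fun i _ ↦ ht i
    -- if `S ≥ T` are the two products, `s a * S + t a * T ≤ c * S + (1 - c) * T`
    -- `= (1 - c) * (S + T) + (2 * c - 1) * S`
    rcases le_total (∏ i ∈ F, s i) (∏ i ∈ F, t i) with h | h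
    · nlinarith [hs a, ht a, hsc a, htc a, hst a]
    · nlinarith [hs a, ht a, hsc a, htc a, hst a]

theorem one_add_pow_le_quadratic_exp {x : ℝ} (hx : 0 ≤ x) (n : ℕ) :
    (1 + x) ^ n ≤ 1 + n * x + (n * x) ^ 2 / 2 * exp (n * x) := by
  induction n with
  | zero => simp
  | succ n ih =>
    push_cast
    have hexp : exp (n * x) * (1 + x) ≤ exp ((n + 1) * x) := by
      rw [add_mul, one_mul, exp_add]
      gcongr
      linarith [add_one_le_exp x]
    have h1 : 1 ≤ exp ((n + 1) * x) := one_le_exp (by positivity)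
    calc (1 + x) ^ (n + 1) = (1 + x) ^ n * (1 + x) := pow_succ _ _
      _ ≤ (1 + n * x + (n * x) ^ 2 / 2 * exp (n * x)) * (1 + x) := by gcongr
      _ ≤ _ := by
        nlinarith [mul_le_mul_of_nonneg_left hexp (by positivity : (0 : ℝ) ≤ (n * x) ^ 2 / 2),
          mul_le_mul_of_nonneg_left h1 (by positivity : (0 : ℝ) ≤ (2 * n + 1) * x ^ 2)]

theorem one_sub_pow_le_quadratic {x : ℝ} (hx : 0 ≤ x) (hx1 : x ≤ 1) (n : ℕ) :
    (1 - x) ^ n ≤ 1 - n * x + (n * x) ^ 2 / 2 := by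
  induction n with
  | zero => simp
  | succ n ih =>
    calc (1 - x) ^ (n + 1) = (1 - x) ^ n * (1 - x) := pow_succ _ _
      _ ≤ (1 - n * x + (n * x) ^ 2 / 2) * (1 - x) := by gcongr
      _ ≤ _ := by
        push_cast
        nlinarith [mul_nonneg (mul_nonneg hx hx) (mul_nonneg hx (n.cast_nonneg : (0 : ℝ) ≤ n))]

theorem half_add_pow_add_half_sub_pow_le {Δ : ℝ} (hΔ0 : 0 ≤ Δ) (hΔ : Δ ≤ 1 / 2) (n : ℕ) :
    (1 / 2 + Δ) ^ n + (1 / 2 - Δ) ^ n ≤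
      (1 / 2) ^ n * (2 + (2 * n * Δ) ^ 2 * exp (2 * n * Δ)) := by
  have hsum : (1 + 2 * Δ) ^ n + (1 - 2 * Δ) ^ n ≤ 2 + (2 * n * Δ) ^ 2 * exp (2 * n * Δ) := by
    have h := add_le_add (one_add_pow_le_quadratic_exp (x := 2 * Δ) (by linarith) n)
      (one_sub_pow_le_quadratic (x := 2 * Δ) (by linarith) (by linarith) n)
    rw [show (n : ℝ) * (2 * Δ) = 2 * n * Δ by ring] at h
    have he : 1 ≤ exp (2 * n * Δ) := one_le_exp (by positivity)
    nlinarith [mul_le_mul_of_nonneg_left he (sq_nonneg (2 * n * Δ))]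
  rw [show 1 / 2 + Δ = 1 / 2 * (1 + 2 * Δ) by ring, show 1 / 2 - Δ = 1 / 2 * (1 - 2 * Δ) by ring,
    mul_pow, mul_pow, ← mul_add]
  gcongr

theorem le_two_pow_ceil_logb {z : ℝ} (hz : 0 < z) : z ≤ 2 ^ ⌈logb 2 z⌉₊ :=
  calc z = 2 ^ logb 2 z := (rpow_logb two_pos (by norm_num) hz).symm
    _ ≤ 2 ^ (⌈logb 2 z⌉₊ : ℝ) := rpow_le_rpow_of_exponent_le one_le_two (Nat.le_ceil _)
    _ = 2 ^ ⌈logb 2 z⌉₊ := rpow_natCast 2 _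

theorem two_pow_pred_ceil_logb_lt {z : ℝ} (hz : 1 < z) : (2 : ℝ) ^ (⌈logb 2 z⌉₊ - 1) < z := by
  have hy : 0 < logb 2 z := logb_pos one_lt_two hz
  have hceil : 1 ≤ ⌈logb 2 z⌉₊ := Nat.one_le_ceil_iff.2 hy
  calc (2 : ℝ) ^ (⌈logb 2 z⌉₊ - 1) = 2 ^ ((⌈logb 2 z⌉₊ : ℝ) - 1) := by
        rw [← rpow_natCast, Nat.cast_sub hceil, Nat.cast_one]
    _ < 2 ^ logb 2 z :=
        rpow_lt_rpow_of_exponent_lt one_lt_two (by linarith [Nat.ceil_lt_add_one hy.le])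
    _ = z := rpow_logb two_pos (by norm_num) (by linarith)

theorem one_le_two_pow_pred_ceil_logb_mul {α : ℝ} (hα0 : 0 < α) (hα1 : α ≤ 1) :
    1 ≤ 2 ^ (⌈logb 2 (2 / α)⌉₊ - 1) * α ∧ 2 ^ (⌈logb 2 (2 / α)⌉₊ - 1) * α ≤ 2 := by
  have h2 : 2 ≤ 2 / α := by rw [le_div_iff₀ hα0]; linarith
  have hceil : 1 ≤ ⌈logb 2 (2 / α)⌉₊ :=
    Nat.one_le_ceil_iff.2 (logb_pos one_lt_two (by linarith))
  have hupper := le_two_pow_ceil_logb (z := 2 / α) (by positivity)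
  have hlower := two_pow_pred_ceil_logb_lt (z := 2 / α) (by linarith)
  rw [← Nat.sub_add_cancel hceil, pow_succ] at hupper
  constructor
  · rw [div_le_iff₀ hα0] at hupper; linarith
  · rw [lt_div_iff₀ hα0] at hlower; linarith

theorem mul_half_pow_ceil_add_mul_half_pow_floor_logb {α : ℝ} (hα0 : 0 < α) (hα2 : α ≤ 2) :
    (2 - 2 ^ (⌈logb 2 (2 / α)⌉₊ - 1) * α) * (1 / 2) ^ ⌈logb 2 (2 / α)⌉₊ +
      (2 ^ (⌈logb 2 (2 / α)⌉₊ - 1) * α - 1) * (1 / 2) ^ ⌊logb 2 (2 / α)⌋₊ = α / 2 := by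
  set y := logb 2 (2 / α)
  rcases (Nat.floor_le_ceil y).eq_or_lt with h | h
  · have hy : y = ⌈y⌉₊ := le_antisymm (Nat.le_ceil y)
        (h ▸ Nat.floor_le (logb_nonneg one_lt_two (by rwa [le_div_iff₀ hα0, one_mul])))
    have hpow : (2 : ℝ) ^ ⌈y⌉₊ = 2 / α := by
      rw [← rpow_natCast, ← hy, rpow_logb two_pos (by norm_num) (by positivity)]
    rw [← h] at hpow ⊢
    rw [one_div_pow, hpow, one_div_div]
    ring
  · have h' : ⌈y⌉₊ = ⌊y⌋₊ + 1 := le_antisymm (Nat.ceil_le_floor_add_one y) h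
    rw [h', Nat.add_sub_cancel, pow_succ]
    have hinv : (1 / 2 : ℝ) ^ ⌊y⌋₊ * 2 ^ ⌊y⌋₊ = 1 := by rw [← mul_pow]; norm_num
    linear_combination (α / 2) * hinv

def oneSided (ι : Type*) (θ : ℝ) : Set (ι → ℝ) :=
  univ.pi (fun _ ↦ Iio θ) ∪ univ.pi (fun _ ↦ Ioi θ)

theorem measurableSet_oneSided (ι : Type*) [Countable ι] (θ : ℝ) :
    MeasurableSet (oneSided ι θ) :=
  (MeasurableSet.univ_pi fun _ ↦ measurableSet_Iio).union
    (MeasurableSet.univ_pi fun _ ↦ measurableSet_Ioi)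

theorem mem_oneSided_of_notMem_Icc_iInf_iSup {ι : Type*} [Finite ι] {v : ι → ℝ} {θ : ℝ}
    (h : θ ∉ Icc (⨅ i, v i) (⨆ i, v i)) : v ∈ oneSided ι θ := by
  rw [mem_Icc, not_and_or, not_le, not_le] at h
  rcases h with h | h
  · exact Or.inr <| mem_univ_pi.2 fun i ↦ h.trans_le (ciInf_le (Finite.bddBelow_range v) i)
  · exact Or.inl <| mem_univ_pi.2 fun i ↦ (le_ciSup (Finite.bddAbove_range v) i).trans_lt h

section MedianBias

variable {Ω : Type*} [MeasurableSpace Ω] {P : Measure Ω} {X : Ω → ℝ} {θ Δ : ℝ}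

theorem half_sub_le_measureReal_of_medBias_le (h : medBias P X θ ≤ Δ) :
    1 / 2 - Δ ≤ P.real {ω | X ω ≤ θ} ∧ 1 / 2 - Δ ≤ P.real {ω | θ ≤ X ω} := by
  simp only [medBias, ← measureReal_def, max_le_iff, sub_le_comm (b := min _ _), le_min_iff] at h
  exact h.1

variable [IsProbabilityMeasure P]

theorem measureReal_lt_le_of_medBias_le (hX : Measurable X) (h : medBias P X θ ≤ Δ) :
    P.real {ω | X ω < θ} ≤ 1 / 2 + Δ := by
  have hcompl : {ω | X ω < θ} = {ω | θ ≤ X ω}ᶜ := by ext; simp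
  rw [hcompl, probReal_compl_eq_one_sub (measurableSet_le measurable_const hX)]
  linarith [(half_sub_le_measureReal_of_medBias_le h).2]

theorem measureReal_gt_le_of_medBias_le (hX : Measurable X) (h : medBias P X θ ≤ Δ) :
    P.real {ω | θ < X ω} ≤ 1 / 2 + Δ := by
  have hcompl : {ω | θ < X ω} = {ω | X ω ≤ θ}ᶜ := by ext; simp
  rw [hcompl, probReal_compl_eq_one_sub (measurableSet_le hX measurable_const)]
  linarith [(half_sub_le_measureReal_of_medBias_le h).1]

theorem measureReal_oneSided_le {ι : Type*} [Fintype ι] {f : ι → Ω → ℝ} (hΔ0 : 0 ≤ Δ)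
    (hΔ : Δ ≤ 1 / 2) (hf : ∀ i, Measurable (f i)) (hind : iIndepFun f P)
    (hbias : ∀ i, medBias P (f i) θ ≤ Δ) :
    P.real ((fun ω i ↦ f i ω) ⁻¹' oneSided ι θ) ≤
      (1 / 2 + Δ) ^ Fintype.card ι + (1 / 2 - Δ) ^ Fintype.card ι := by
  have hprod (I : Set ℝ) (hI : MeasurableSet I) :
      P.real ((fun ω i ↦ f i ω) ⁻¹' univ.pi fun _ ↦ I) = ∏ i, P.real (f i ⁻¹' I) := by
    simp only [measureReal_def, ← ENNReal.toReal_prod]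
    rw [← hind.meas_iInter fun i ↦ ⟨I, hI, rfl⟩]
    congr 2
    ext; simp
  have hdisj (i : ι) : P.real (f i ⁻¹' Iio θ) + P.real (f i ⁻¹' Ioi θ) ≤ 1 := by
    rw [← measureReal_union (((Iic_disjoint_Ioi le_rfl).mono_left Iio_subset_Iic_self).preimage _)
      (measurableSet_Ioi.preimage (hf i))]
    exact measureReal_le_one
  calc _ ≤ P.real ((fun ω i ↦ f i ω) ⁻¹' univ.pi fun _ ↦ Iio θ) +
        P.real ((fun ω i ↦ f i ω) ⁻¹' univ.pi fun _ ↦ Ioi θ) := measureReal_union_le _ _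
    _ = ∏ i, P.real (f i ⁻¹' Iio θ) + ∏ i, P.real (f i ⁻¹' Ioi θ) := by
        rw [hprod _ measurableSet_Iio, hprod _ measurableSet_Ioi]
    _ ≤ (1 / 2 + Δ) ^ Fintype.card ι + (1 - (1 / 2 + Δ)) ^ Fintype.card ι :=
        Finset.prod_add_prod_le_pow_add_one_sub_pow _ (by linarith) (by linarith)
          (fun _ ↦ measureReal_nonneg) (fun _ ↦ measureReal_nonneg)
          (fun i ↦ measureReal_lt_le_of_medBias_le (hf i) (hbias i))
          (fun i ↦ measureReal_gt_le_of_medBias_le (hf i) (hbias i)) hdisj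
    _ = _ := by ring_nf

end MedianBias

theorem ProbabilityTheory.IndepFun.measureReal_inter_preimage_eq_mul {Ω β γ : Type*}
    [MeasurableSpace Ω] {P : Measure Ω} [MeasurableSpace β] [MeasurableSpace γ] {f : Ω → β}
    {g : Ω → γ} (h : IndepFun f g P) (s : Set β) (t : Set γ) (hs : MeasurableSet s)
    (ht : MeasurableSet t) : P.real (f ⁻¹' s ∩ g ⁻¹' t) = P.real (f ⁻¹' s) * P.real (g ⁻¹' t) := by
  simp only [measureReal_def, h.measure_inter_preimage_eq_mul s t hs ht, ENNReal.toReal_mul]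

theorem measureReal_le_mixture {Ω κ : Type*} [MeasurableSpace Ω] {P : Measure Ω}
    [IsProbabilityMeasure P] [MeasurableSpace κ] [MeasurableSingletonClass κ]
    {β : κ → Type*} [∀ k, MeasurableSpace (β k)] {N : Ω → κ} (hN : Measurable N) {k₁ k₂ : κ}
    (hN₁₂ : ∀ ω, N ω = k₁ ∨ N ω = k₂) {V : (k : κ) → Ω → β k} {S : (k : κ) → Set (β k)}
    (hS₁ : MeasurableSet (S k₁)) (hS₂ : MeasurableSet (S k₂))
    (hV₁ : IndepFun (V k₁) N P) (hV₂ : IndepFun (V k₂) N P)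
    {E : Set Ω} (hE : ∀ ω ∈ E, V (N ω) ω ∈ S (N ω)) :
    P.real E ≤ P.real (V k₂ ⁻¹' S k₂) * P.real {ω | N ω = k₂} +
      P.real (V k₁ ⁻¹' S k₁) * (1 - P.real {ω | N ω = k₂}) := by
  have hsplit : E ⊆ (V k₂ ⁻¹' S k₂ ∩ N ⁻¹' {k₂}) ∪ (V k₁ ⁻¹' S k₁ ∩ N ⁻¹' {k₂}ᶜ) := by
    intro ω hω
    have hV := hE ω hω
    by_cases h : N ω = k₂
    · rw [h] at hV
      exact Or.inl ⟨hV, h⟩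
    · rw [(hN₁₂ ω).resolve_right h] at hV
      exact Or.inr ⟨hV, h⟩
  calc P.real E
      ≤ P.real (V k₂ ⁻¹' S k₂ ∩ N ⁻¹' {k₂}) + P.real (V k₁ ⁻¹' S k₁ ∩ N ⁻¹' {k₂}ᶜ) :=
        (measureReal_mono hsplit).trans (measureReal_union_le _ _)
    _ = _ := by
        rw [hV₂.measureReal_inter_preimage_eq_mul _ _ hS₂ (measurableSet_singleton k₂),
          hV₁.measureReal_inter_preimage_eq_mul _ _ hS₁ (measurableSet_singleton k₂).compl,
          preimage_compl, probReal_compl_eq_one_sub (hN (measurableSet_singleton k₂))]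
        rfl

/-- finite-sample validity of HulC, Theorem 1 of the paper.
With `B = ⌈log₂(2/α)⌉`, `B' = ⌊log₂(2/α)⌋`, a randomized bucket count `B*` with
`P(B* = B) = 2 − 2^{B−1}α`, and for each `b ∈ {B', B}` estimators `θ̂^{(b,1)}, …, θ̂^{(b,b)}`
that are mutually independent, independent of `B*`, and with median bias about `θ₀`
at most `Δ`, the HulC interval misses `θ₀` with probability at most
`α(1 + 2(BΔ)² e^{2BΔ})`. -/
theorem hulc_coverage {Ω : Type*} [MeasurableSpace Ω]
    (P : Measure Ω) [IsProbabilityMeasure P]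
    (α : ℝ) (hα0 : 0 < α) (hα1 : α ≤ 1)
    (B B' : ℕ) (hB : B = ⌈Real.logb 2 (2 / α)⌉₊) (hB' : B' = ⌊Real.logb 2 (2 / α)⌋₊)
    (Bstar : Ω → ℕ) (hBstarMeas : Measurable Bstar)
    (hBstarVals : ∀ ω, Bstar ω = B' ∨ Bstar ω = B)
    (hBstarLaw : P {ω | Bstar ω = B} = ENNReal.ofReal (2 - 2 ^ (B - 1) * α))
    (θ₀ Δ : ℝ) (hΔ0 : 0 ≤ Δ) (hΔhalf : Δ ≤ 1 / 2)
    (θh : (b : ℕ) → Fin b → Ω → ℝ)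
    (hmeas : ∀ b (j : Fin b), Measurable (θh b j))
    (hindep : ∀ b : ℕ, b = B' ∨ b = B → iIndepFun (θh b) P)
    (hindepBstar : ∀ b : ℕ, b = B' ∨ b = B →
      IndepFun (fun ω => fun j : Fin b => θh b j ω) Bstar P)
    (hbias : ∀ b : ℕ, b = B' ∨ b = B → ∀ j : Fin b, medBias P (θh b j) θ₀ ≤ Δ) :
    P {ω | θ₀ ∉ Set.Icc (⨅ j : Fin (Bstar ω), θh (Bstar ω) j ω)
          (⨆ j : Fin (Bstar ω), θh (Bstar ω) j ω)} ≤
      ENNReal.ofReal (α * (1 + 2 * ((B : ℝ) * Δ) ^ 2 * Real.exp (2 * (B : ℝ) * Δ))) := by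
  obtain ⟨hq_le_one, hq_nonneg⟩ : 1 ≤ 2 ^ (B - 1) * α ∧ 2 ^ (B - 1) * α ≤ 2 := by
    rw [hB]; exact one_le_two_pow_pred_ceil_logb_mul hα0 hα1
  have hweights : (2 - 2 ^ (B - 1) * α) * (1 / 2) ^ B + (2 ^ (B - 1) * α - 1) * (1 / 2) ^ B' =
      α / 2 := by
    rw [hB, hB']; exact mul_half_pow_ceil_add_mul_half_pow_floor_logb hα0 (by linarith)
  have hB'B : B' ≤ B := by rw [hB, hB']; exact Nat.floor_le_ceil _
  set q := 2 - 2 ^ (B - 1) * α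
  set K := 2 + (2 * B * Δ) ^ 2 * exp (2 * B * Δ) with hK
  have hside (b : ℕ) (hb : b = B' ∨ b = B) :
      P.real ((fun ω j ↦ θh b j ω) ⁻¹' oneSided (Fin b) θ₀) ≤ (1 / 2) ^ b * K := by
    have hbB : (b : ℝ) ≤ B := by rcases hb with rfl | rfl <;> simp [hB'B]
    calc _ ≤ (1 / 2 + Δ) ^ b + (1 / 2 - Δ) ^ b := by
          simpa using measureReal_oneSided_le hΔ0 hΔhalf (hmeas b) (hindep b hb) (hbias b hb)
      _ ≤ (1 / 2) ^ b * (2 + (2 * b * Δ) ^ 2 * exp (2 * b * Δ)) :=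
          half_add_pow_add_half_sub_pow_le hΔ0 hΔhalf b
      _ ≤ (1 / 2) ^ b * K := by rw [hK]; gcongr
  have hlaw : P.real {ω | Bstar ω = B} = q := by
    rw [measureReal_def, hBstarLaw, ENNReal.toReal_ofReal (by linarith)]
  rw [← ofReal_measureReal]
  refine ENNReal.ofReal_le_ofReal ?_
  calc _ ≤ _ := measureReal_le_mixture (V := fun b ω j ↦ θh b j ω)
        (S := fun b ↦ oneSided (Fin b) θ₀) hBstarMeas hBstarVals (measurableSet_oneSided _ θ₀)
        (measurableSet_oneSided _ θ₀) (hindepBstar B' (.inl rfl)) (hindepBstar B (.inr rfl))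
        fun ω hω ↦ mem_oneSided_of_notMem_Icc_iInf_iSup hω
    _ ≤ (1 / 2) ^ B * K * q + (1 / 2) ^ B' * K * (1 - q) := by
        rw [hlaw]
        gcongr
        · exact hside B (.inr rfl)
        · linarith
        · exact hside B' (.inl rfl)
    _ = α / 2 * K := by rw [← hweights]; ring
    _ = _ := by ring
end

section
/- Let X be a real-valued random variable, θ ∈ ℝ, and let F : ℝ → [0,1] be any nondecreasing function with lim_{t→−∞} F(t) = 0 and F(t) + F(−t) = 1 for all t ∈ ℝ (the distribution function of a distribution symmetric about zero). Then (1/2 − min(P(X ≤ θ), P(X ≥ θ)))₊ ≤ sup_{t ∈ ℝ} |P(X − θ ≤ t) − F(t)|. In particular, the median bias of X about θ is at most inf over σ ≥ 0 of sup_{t ∈ ℝ} |P(X − θ ≤ t) − Φ(t/σ)|, where Φ is the standard normal distribution function. -/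
open MeasureTheory ProbabilityTheory
open scoped ENNReal

/-- The standard normal cumulative distribution function `Φ`. -/
noncomputable def stdGaussianCDF (t : ℝ) : ℝ :=
  ((gaussianReal 0 1) (Set.Iic t)).toReal

/-- `t ↦ Φ(t/σ)`, the CDF of a centered normal with standard deviation `σ ≥ 0`, with the
convention that for `σ = 0` it is the CDF `1{t ≥ 0}` of the point mass at zero. -/
noncomputable def scaledGaussianCDF (σ t : ℝ) : ℝ :=
  if σ = 0 then (if 0 ≤ t then 1 else 0) else stdGaussianCDF (t / σ)

lemma stdGaussianCDF_zero : stdGaussianCDF 0 = 1/2 := by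
  have hmap : (gaussianReal 0 1).map (fun x => (-1 : ℝ) * x) = gaussianReal 0 1 := by
    rw [gaussianReal_map_const_mul]
    norm_num
  have hIci : gaussianReal 0 1 (Set.Ici (0:ℝ)) = gaussianReal 0 1 (Set.Iic (0:ℝ)) := by
    conv_lhs => rw [← hmap]
    rw [Measure.map_apply (by fun_prop) measurableSet_Ici]
    congr 1
    ext x
    simp [neg_nonneg]
  have hsingle : gaussianReal 0 1 {(0:ℝ)} = 0 := by
    have : (gaussianReal 0 1) ≪ volume := by
      rw [gaussianReal_of_var_ne_zero _ one_ne_zero]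
      exact withDensity_absolutelyContinuous _ _
    exact this (measure_singleton 0)
  have hIoi : gaussianReal 0 1 (Set.Ioi (0:ℝ)) = gaussianReal 0 1 (Set.Iic (0:ℝ)) := by
    have : gaussianReal 0 1 (Set.Ici (0:ℝ)) = gaussianReal 0 1 (Set.Ioi (0:ℝ)) + gaussianReal 0 1 {(0:ℝ)} := by
      rw [← measure_union (by simp [Set.disjoint_left]; intros; positivity) (measurableSet_singleton 0)]
      congr 1
      ext x; simp [le_iff_lt_or_eq, or_comm, eq_comm]
    rw [hsingle, add_zero] at this
    rw [← this, hIci]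
  have htot : gaussianReal 0 1 (Set.Iic (0:ℝ)) + gaussianReal 0 1 (Set.Ioi (0:ℝ)) = 1 := by
    rw [← measure_union (by simp [Set.disjoint_left]) measurableSet_Ioi]
    simp [Set.Iic_union_Ioi]
  rw [hIoi] at htot
  have h2 : (2:ℝ≥0∞) * gaussianReal 0 1 (Set.Iic (0:ℝ)) = 1 := by
    rw [two_mul]; exact htot
  unfold stdGaussianCDF
  have := congrArg ENNReal.toReal h2
  rw [ENNReal.toReal_mul] at this
  simp at this
  linarith

section aux
variable {Ω : Type*} [MeasurableSpace Ω] (P : Measure Ω) [IsProbabilityMeasure P]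
  (X : Ω → ℝ) (θ : ℝ)

lemma toReal_prob_le_one (s : Set Ω) : (P s).toReal ≤ 1 := by
  have h := prob_le_one (μ := P) (s := s)
  simpa using ENNReal.toReal_mono ENNReal.one_ne_top h

lemma sum_prob_ge_one : 1 ≤ (P {ω | X ω ≤ θ}).toReal + (P {ω | θ ≤ X ω}).toReal := by
  have hu : ({ω | X ω ≤ θ} ∪ {ω | θ ≤ X ω} : Set Ω) = Set.univ := by
    ext ω; simp [le_total]
  have h1 : (1:ℝ≥0∞) = P Set.univ := (measure_univ).symm
  have h2 : P Set.univ ≤ P {ω | X ω ≤ θ} + P {ω | θ ≤ X ω} := by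
    rw [← hu]; exact measure_union_le _ _
  have h3 : (1:ℝ≥0∞) ≤ P {ω | X ω ≤ θ} + P {ω | θ ≤ X ω} := h1 ▸ h2
  have hfin : P {ω | X ω ≤ θ} + P {ω | θ ≤ X ω} ≠ ∞ :=
    ENNReal.add_ne_top.2 ⟨measure_ne_top _ _, measure_ne_top _ _⟩
  calc (1:ℝ) = (1:ℝ≥0∞).toReal := by simp
    _ ≤ (P {ω | X ω ≤ θ} + P {ω | θ ≤ X ω}).toReal := ENNReal.toReal_mono hfin h3
    _ = _ := ENNReal.toReal_add (measure_ne_top _ _) (measure_ne_top _ _)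

lemma set_eq_zero : {ω | X ω ≤ θ} = {ω | X ω - θ ≤ 0} := by
  ext ω; simp [sub_nonpos]

lemma bdd_abs (F : ℝ → ℝ) (hF01 : ∀ t, 0 ≤ F t ∧ F t ≤ 1) :
    BddAbove (Set.range fun t => |(P {ω | X ω - θ ≤ t}).toReal - F t|) := by
  refine ⟨1, fun x hx => ?_⟩
  obtain ⟨t, rfl⟩ := hx
  have h1 : (P {ω | X ω - θ ≤ t}).toReal ≤ 1 := toReal_prob_le_one P _
  have h2 : 0 ≤ (P {ω | X ω - θ ≤ t}).toReal := ENNReal.toReal_nonneg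
  have := (hF01 t).1; have := (hF01 t).2
  rw [abs_sub_le_iff]; constructor <;> linarith

/-- Key lemma: the only thing needed about `F` is `F 0 = 1/2`. -/
lemma medBias_le_of_F_zero (F : ℝ → ℝ) (hF01 : ∀ t, 0 ≤ F t ∧ F t ≤ 1)
    (hF0 : F 0 = 1/2) :
    medBias P X θ ≤ ⨆ t : ℝ, |(P {ω | X ω - θ ≤ t}).toReal - F t| := by
  set D := ⨆ t : ℝ, |(P {ω | X ω - θ ≤ t}).toReal - F t| with hD
  have hle : ∀ t, |(P {ω | X ω - θ ≤ t}).toReal - F t| ≤ D :=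
    fun t => le_ciSup (bdd_abs P X θ F hF01) t
  have hA : (P {ω | X ω ≤ θ}).toReal = (P {ω | X ω - θ ≤ 0}).toReal := by
    rw [set_eq_zero]
  have h0 := hle 0
  rw [hF0, ← hA] at h0
  set A := (P {ω | X ω ≤ θ}).toReal
  set B := (P {ω | θ ≤ X ω}).toReal
  have hAB := sum_prob_ge_one P X θ
  have habs1 := le_abs_self (A - 1/2)
  have habs2 := neg_abs_le (A - 1/2)
  have hDnn : 0 ≤ D := (abs_nonneg _).trans h0
  unfold medBias
  apply max_le _ hDnn
  rcases le_total A B with h | h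
  · rw [min_eq_left h]; linarith
  · rw [min_eq_right h]; linarith

end aux

/-- The median bias of `X` about `θ` is bounded by the Kolmogorov distance
of the distribution of `X − θ` to any distribution function symmetric about zero; in
particular it is bounded by the infimum over `σ ≥ 0` of the Kolmogorov distance to `Φ(·/σ)`. -/
theorem medBias_le_dist_to_symmetric {Ω : Type*} [MeasurableSpace Ω]
    (P : Measure Ω) [IsProbabilityMeasure P]
    (X : Ω → ℝ) (θ : ℝ) (F : ℝ → ℝ)
    (hF01 : ∀ t, 0 ≤ F t ∧ F t ≤ 1)
    (hFmono : Monotone F)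
    (hFlim : Filter.Tendsto F Filter.atBot (nhds 0))
    (hFsym : ∀ t, F t + F (-t) = 1) :
    (medBias P X θ ≤ ⨆ t : ℝ, |(P {ω | X ω - θ ≤ t}).toReal - F t|) ∧
      medBias P X θ ≤
        ⨅ σ : Set.Ici (0 : ℝ),
          ⨆ t : ℝ, |(P {ω | X ω - θ ≤ t}).toReal - scaledGaussianCDF σ.1 t| := by
  constructor
  · apply medBias_le_of_F_zero P X θ F hF01
    have := hFsym 0
    simp at this
    linarith
  · apply le_ciInf
    rintro ⟨σ, hσ⟩
    rcases eq_or_lt_of_le (Set.mem_Ici.mp hσ) with hσ0 | hσ0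
    · -- σ = 0 case
      subst hσ0
      set F0 : ℝ → ℝ := scaledGaussianCDF 0 with hF0def
      have hF0 : ∀ t, F0 t = if 0 ≤ t then 1 else 0 := by
        intro t; simp [hF0def, scaledGaussianCDF]
      have hF001 : ∀ t, 0 ≤ F0 t ∧ F0 t ≤ 1 := by
        intro t; rw [hF0 t]; split <;> norm_num
      set D := ⨆ t : ℝ, |(P {ω | X ω - θ ≤ t}).toReal - F0 t| with hD
      have hle : ∀ t, |(P {ω | X ω - θ ≤ t}).toReal - F0 t| ≤ D :=
        fun t => le_ciSup (bdd_abs P X θ F0 hF001) t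
      have hDnn : 0 ≤ D := (abs_nonneg _).trans (hle 0)
      -- bound for A
      have hA : (P {ω | X ω ≤ θ}).toReal = (P {ω | X ω - θ ≤ 0}).toReal := by
        rw [set_eq_zero]
      have h0 := hle 0
      rw [hF0 0, if_pos le_rfl, ← hA] at h0
      set A := (P {ω | X ω ≤ θ}).toReal
      set B := (P {ω | θ ≤ X ω}).toReal
      -- bound for B : P {X - θ < 0} ≤ D
      have hlt : (P {ω | X ω - θ < 0}).toReal ≤ D := by
        have hunion : {ω | X ω - θ < 0} = ⋃ n : ℕ, {ω | X ω - θ ≤ -(1/(n+1))} := by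
          ext ω
          simp only [Set.mem_setOf_eq, Set.mem_iUnion]
          constructor
          · intro h
            obtain ⟨n, hn⟩ := exists_nat_one_div_lt (show (0:ℝ) < -(X ω - θ) by linarith)
            exact ⟨n, by push_cast at hn ⊢; linarith⟩
          · rintro ⟨n, hn⟩
            have : (0:ℝ) < 1/(n+1) := by positivity
            linarith
        have hmono : Monotone (fun n : ℕ => {ω | X ω - θ ≤ -(1/(n+1 : ℝ))}) := by
          intro m n hmn ω hω
          simp only [Set.mem_setOf_eq] at *
          have h1 : (1:ℝ)/(n+1) ≤ 1/(m+1) := by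
            apply one_div_le_one_div_of_le (by positivity)
            exact_mod_cast by omega
          linarith
        have := hmono.measure_iUnion (μ := P)
        rw [hunion, this]
        have hbound : ∀ n : ℕ, P {ω | X ω - θ ≤ -(1/(n+1 : ℝ))} ≤ ENNReal.ofReal D := by
          intro n
          have ht := hle (-(1/(n+1 : ℝ)))
          have hpos : (0:ℝ) < 1/(n+1) := by positivity
          have hneg : ¬ (0:ℝ) ≤ -(1/(n+1 : ℝ)) := by intro hc; linarith
          rw [hF0 (-(1/(n+1 : ℝ))), if_neg hneg] at ht
          rw [sub_zero, abs_of_nonneg ENNReal.toReal_nonneg] at ht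
          exact (ENNReal.le_ofReal_iff_toReal_le (measure_ne_top _ _) hDnn).2 ht
        have hsup : (⨆ n : ℕ, P {ω | X ω - θ ≤ -(1/(n+1 : ℝ))}) ≤ ENNReal.ofReal D :=
          iSup_le hbound
        exact ENNReal.toReal_le_of_le_ofReal hDnn hsup
      -- 1 ≤ P{X-θ<0} + B
      have hcov : 1 ≤ (P {ω | X ω - θ < 0}).toReal + B := by
        have hu : ({ω | X ω - θ < 0} ∪ {ω | θ ≤ X ω} : Set Ω) = Set.univ := by
          ext ω
          simp only [Set.mem_union, Set.mem_setOf_eq, Set.mem_univ, iff_true]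
          rcases lt_or_ge (X ω) θ with h | h
          · exact Or.inl (by linarith)
          · exact Or.inr h
        have h2 : (1:ℝ≥0∞) ≤ P {ω | X ω - θ < 0} + P {ω | θ ≤ X ω} := by
          rw [← measure_univ (μ := P), ← hu]; exact measure_union_le _ _
        have hfin : P {ω | X ω - θ < 0} + P {ω | θ ≤ X ω} ≠ ∞ :=
          ENNReal.add_ne_top.2 ⟨measure_ne_top _ _, measure_ne_top _ _⟩
        calc (1:ℝ) = (1:ℝ≥0∞).toReal := by simp
          _ ≤ (P {ω | X ω - θ < 0} + P {ω | θ ≤ X ω}).toReal := ENNReal.toReal_mono hfin h2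
          _ = _ := ENNReal.toReal_add (measure_ne_top _ _) (measure_ne_top _ _)
      have hA1 : A ≤ 1 := toReal_prob_le_one P _
      have habs1 := le_abs_self (A - 1)
      have habs2 := neg_abs_le (A - 1)
      unfold medBias
      apply max_le _ hDnn
      rcases le_total A B with h | h
      · rw [min_eq_left h]; linarith
      · rw [min_eq_right h]; linarith
    · -- σ > 0 case
      apply medBias_le_of_F_zero
      · intro t
        have hne : σ ≠ 0 := ne_of_gt hσ0
        simp only [scaledGaussianCDF, if_neg hne, stdGaussianCDF]
        exact ⟨ENNReal.toReal_nonneg, toReal_prob_le_one _ _⟩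
      · have hne : σ ≠ 0 := ne_of_gt hσ0
        simp only [scaledGaussianCDF, if_neg hne, zero_div]
        exact stdGaussianCDF_zero
end

section
/- Let α ∈ (0,1], B = ⌈log₂(2/α)⌉ and B' = ⌊log₂(2/α)⌋. Let U be a random variable uniformly distributed on [0,1], and define B* := B if U > 2^{B−1}α − 1 and B* := B' otherwise. Then E[2^{1−B*}] = α. Moreover, if log₂(2/α) is an integer, then B* = log₂(2/α) almost surely. -/
/-!
Write `L = log₂(2/α)` and `c = 2^{B-1} α`. Since `B - 1 < L ≤ B`, we have `1 ≤ c < 2`, so the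
threshold `t = c - 1` lies in `[0, 1)` and `B* = B'` with probability exactly `t`. If `B' = B - 1`
the mixture `(1 - t) 2^{1-B} + t 2^{2-B} = (1 + t) 2^{1-B} = c 2^{1-B}` is `α`; if `B' = B` then
`L = B` is an integer, `c = 1` and `t = 0`, so `B* = B` and `2^{1-B} = α`.
-/

open MeasureTheory Real Set

theorem integral_Icc_zero_one_ite_lt (a b t : ℝ) (ht0 : 0 ≤ t) (ht1 : t ≤ 1) :
    ∫ u in Icc (0 : ℝ) 1, (if t < u then a else b) = (1 - t) * a + t * b := by
  have hIoc : Ioi t ∩ Icc 0 1 = Ioc t 1 := by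
    ext u; simp only [mem_inter_iff, mem_Ioi, mem_Icc, mem_Ioc]; grind
  have hIcc : Iic t ∩ Icc 0 1 = Icc 0 t := by
    ext u; simp only [mem_inter_iff, mem_Iic, mem_Icc]; grind
  change ∫ u in Icc (0 : ℝ) 1, (Ioi t).piecewise (fun _ => a) (fun _ => b) u = _
  rw [integral_piecewise measurableSet_Ioi (integrableOn_const (measure_ne_top _ _))
      (integrableOn_const (measure_ne_top _ _)),
    setIntegral_const, setIntegral_const, measureReal_restrict_apply measurableSet_Ioi,
    measureReal_restrict_apply measurableSet_Ioi.compl, compl_Ioi, hIoc, hIcc,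
    volume_real_Ioc_of_le ht1, volume_real_Icc_of_le ht0, smul_eq_mul, smul_eq_mul, sub_zero]

theorem two_zpow_one_sub_natCast (k : ℕ) : (2 : ℝ) ^ ((1 : ℤ) - k) = 2 / 2 ^ k := by
  rw [zpow_sub₀ two_ne_zero, zpow_one, zpow_natCast]

section BucketCount

variable {α : ℝ}

theorem logb_two_div_pos (hα0 : 0 < α) (hα2 : α < 2) : 0 < logb 2 (2 / α) :=
  logb_pos one_lt_two (by rw [lt_div_iff₀ hα0]; linarith)

theorem two_le_two_pow_ceil_logb_two_div_mul (hα0 : 0 < α) :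
    2 ≤ 2 ^ ⌈logb 2 (2 / α)⌉₊ * α := by
  have h : 2 / α ≤ 2 ^ (⌈logb 2 (2 / α)⌉₊ : ℝ) :=
    (logb_le_iff_le_rpow one_lt_two (by positivity)).1 (Nat.le_ceil _)
  rwa [rpow_natCast, div_le_iff₀ hα0] at h

theorem two_pow_floor_logb_two_div_mul_le_two (hα0 : 0 < α) (hα2 : α < 2) :
    2 ^ ⌊logb 2 (2 / α)⌋₊ * α ≤ 2 := by
  have h : 2 ^ (⌊logb 2 (2 / α)⌋₊ : ℝ) ≤ 2 / α :=
    (le_logb_iff_rpow_le one_lt_two (by positivity)).1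
      (Nat.floor_le (logb_two_div_pos hα0 hα2).le)
  rwa [rpow_natCast, le_div_iff₀ hα0] at h

theorem two_pow_pred_ceil_logb_two_div_mul_lt_two (hα0 : 0 < α) (hα2 : α < 2) :
    2 ^ (⌈logb 2 (2 / α)⌉₊ - 1) * α < 2 := by
  have hL := logb_two_div_pos hα0 hα2
  have hlt : ((⌈logb 2 (2 / α)⌉₊ - 1 : ℕ) : ℝ) < logb 2 (2 / α) := by
    rw [Nat.cast_pred (Nat.ceil_pos.2 hL)]
    linarith [Nat.ceil_lt_add_one hL.le]
  have h := (lt_logb_iff_rpow_lt one_lt_two (by positivity)).1 hlt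
  rwa [rpow_natCast, lt_div_iff₀ hα0] at h

theorem one_le_two_pow_pred_ceil_logb_two_div_mul (hα0 : 0 < α) (hα2 : α < 2) :
    1 ≤ 2 ^ (⌈logb 2 (2 / α)⌉₊ - 1) * α := by
  have h := two_le_two_pow_ceil_logb_two_div_mul hα0
  rw [← Nat.sub_add_cancel (Nat.ceil_pos.2 (logb_two_div_pos hα0 hα2)), pow_succ] at h
  linarith

theorem bucket_mixture_eq (hα0 : 0 < α) (hα2 : α < 2) :
    (1 - (2 ^ (⌈logb 2 (2 / α)⌉₊ - 1) * α - 1)) * 2 ^ ((1 : ℤ) - ⌈logb 2 (2 / α)⌉₊) +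
      (2 ^ (⌈logb 2 (2 / α)⌉₊ - 1) * α - 1) * 2 ^ ((1 : ℤ) - ⌊logb 2 (2 / α)⌋₊) = α := by
  have hc_ge := one_le_two_pow_pred_ceil_logb_two_div_mul hα0 hα2
  have hfloor := two_pow_floor_logb_two_div_mul_le_two hα0 hα2
  obtain ⟨n, hn⟩ : ∃ n, ⌈logb 2 (2 / α)⌉₊ = n + 1 :=
    Nat.exists_eq_add_one.2 (Nat.ceil_pos.2 (logb_two_div_pos hα0 hα2))
  have hfloor_eq : ⌊logb 2 (2 / α)⌋₊ = n ∨ ⌊logb 2 (2 / α)⌋₊ = n + 1 := by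
    have := Nat.floor_le_ceil (logb 2 (2 / α))
    have := Nat.ceil_le_floor_add_one (logb 2 (2 / α))
    omega
  simp only [two_zpow_one_sub_natCast, hn, Nat.add_sub_cancel] at hc_ge ⊢
  rcases hfloor_eq with h | h <;> rw [h] at hfloor ⊢
  · field_simp
    ring
  · have hc : 2 ^ n * α = 1 := le_antisymm (by rw [pow_succ] at hfloor; linarith) hc_ge
    rw [hc, sub_self, sub_zero, zero_mul, add_zero, one_mul, pow_succ]
    field_simp
    linarith

end BucketCount

theorem hulc_bucket_count_general {Ω : Type*} [MeasurableSpace Ω]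
    (P : Measure Ω)
    (α : ℝ) (hα0 : 0 < α) (hα1 : α ≤ 1)
    (B B' : ℕ) (hB : B = ⌈Real.logb 2 (2 / α)⌉₊) (hB' : B' = ⌊Real.logb 2 (2 / α)⌋₊)
    (U : Ω → ℝ) (hUmeas : Measurable U)
    (hUlaw : Measure.map U P = MeasureTheory.volume.restrict (Set.Icc (0 : ℝ) 1))
    (Bstar : Ω → ℕ)
    (hBstar : ∀ ω, Bstar ω = if (2 : ℝ) ^ (B - 1) * α - 1 < U ω then B else B') :
    (∫ ω, (2 : ℝ) ^ ((1 : ℤ) - (Bstar ω : ℤ)) ∂P) = α ∧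
      ((∃ k : ℤ, Real.logb 2 (2 / α) = (k : ℝ)) →
        ∀ᵐ ω ∂P, (Bstar ω : ℝ) = Real.logb 2 (2 / α)) := by
  have hα2 : α < 2 := by linarith
  refine ⟨?_, ?_⟩
  · subst hB hB'
    set t := (2 : ℝ) ^ (⌈logb 2 (2 / α)⌉₊ - 1) * α - 1
    have ht0 : 0 ≤ t := by linarith [one_le_two_pow_pred_ceil_logb_two_div_mul hα0 hα2]
    have ht1 : t ≤ 1 := by linarith [two_pow_pred_ceil_logb_two_div_mul_lt_two hα0 hα2]
    set g : ℝ → ℝ := fun u => if t < u then 2 ^ ((1 : ℤ) - ⌈logb 2 (2 / α)⌉₊)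
      else 2 ^ ((1 : ℤ) - ⌊logb 2 (2 / α)⌋₊)
    have hlaw : ∀ ω, (2 : ℝ) ^ ((1 : ℤ) - (Bstar ω : ℤ)) = g (U ω) := fun ω => by
      rw [hBstar]; exact apply_ite (fun n : ℕ => (2 : ℝ) ^ ((1 : ℤ) - n)) _ _ _
    simp only [hlaw]
    rw [← integral_map hUmeas.aemeasurable
        (Measurable.ite measurableSet_Ioi measurable_const measurable_const).aestronglyMeasurable,
      hUlaw, integral_Icc_zero_one_ite_lt _ _ _ ht0 ht1]
    exact bucket_mixture_eq hα0 hα2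
  · rintro ⟨k, hk⟩
    lift k to ℕ using (by exact_mod_cast hk ▸ (logb_two_div_pos hα0 hα2).le)
    rw [Int.cast_natCast] at hk
    have hBk : B = k := by rw [hB, hk, Nat.ceil_natCast]
    have hB'k : B' = k := by rw [hB', hk, Nat.floor_natCast]
    exact Filter.Eventually.of_forall fun ω => by rw [hBstar, hBk, hB'k, ite_self, hk]

/-- the randomized bucket count of HulC.
With `B = ⌈log₂(2/α)⌉`, `B' = ⌊log₂(2/α)⌋`, `U` uniform on `[0,1]` and
`B* = B` if `U > 2^{B−1}α − 1` and `B* = B'` otherwise, we have `E[2^{1−B*}] = α`;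
moreover if `log₂(2/α)` is an integer then `B* = log₂(2/α)` almost surely. -/
theorem hulc_bucket_count {Ω : Type*} [MeasurableSpace Ω]
    (P : Measure Ω) [IsProbabilityMeasure P]
    (α : ℝ) (hα0 : 0 < α) (hα1 : α ≤ 1)
    (B B' : ℕ) (hB : B = ⌈Real.logb 2 (2 / α)⌉₊) (hB' : B' = ⌊Real.logb 2 (2 / α)⌋₊)
    (U : Ω → ℝ) (hUmeas : Measurable U)
    (hUlaw : Measure.map U P = MeasureTheory.volume.restrict (Set.Icc (0 : ℝ) 1))
    (Bstar : Ω → ℕ)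
    (hBstar : ∀ ω, Bstar ω = if (2 : ℝ) ^ (B - 1) * α - 1 < U ω then B else B') :
    (∫ ω, (2 : ℝ) ^ ((1 : ℤ) - (Bstar ω : ℤ)) ∂P) = α ∧
      ((∃ k : ℤ, Real.logb 2 (2 / α) = (k : ℝ)) →
        ∀ᵐ ω ∂P, (Bstar ω : ℝ) = Real.logb 2 (2 / α)) :=
  hulc_bucket_count_general P α hα0 hα1 B B' hB hB' U hUmeas hUlaw Bstar hBstar
end

section
/- Let α ∈ (0,1], B = ⌈log₂(2/α)⌉, B' = ⌊log₂(2/α)⌋, and let B* be a random variable taking values in {B', B} with P(B* = B) = 2 − 2^{B−1}α. Fix θ₀ ∈ ℝ. Suppose for each T ≥ 1 and each b ∈ {B', B} there are real-valued random variables θ̂_T^{(b,1)}, …, θ̂_T^{(b,b)} that are mutually independent and independent of B*, and suppose there are constants r_{T,j} > 0 and σ_j > 0 such that, for each j, r_{T,j}(θ̂_T^{(b,j)} − θ₀) converges in distribution to N(0, σ_j²) as T → ∞. Then P( θ₀ ∉ [ min_{1≤j≤B*} θ̂_T^{(B*,j)}, max_{1≤j≤B*} θ̂_T^{(B*,j)}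 ] ) → α as T → ∞. -/
/-!
With `b` buckets, `θ₀` misses the hull of the estimates exactly when all of them fall on the same
side of `θ₀`. Each side has limiting probability `1/2`: the Gaussian limit is symmetric and has no
atom at `0`, the frontier of both half-lines, so the portmanteau theorem applies. By independence
the miss probability with `b` buckets therefore tends to `2 · 2⁻ᵇ`. As `B*` is independent of the
estimates, the HulC miss probability is the mixture of these over the law of `B*`, whose limit
`E[2^{1 - B*}]` is `α` by the choice of `P(B* = B)`.
-/

open MeasureTheory ProbabilityTheory Filter

/-- The law (distribution) of a real-valued random variable, as a probability measure. -/
noncomputable def law {Ω : Type*} [MeasurableSpace Ω] (P : Measure Ω)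
    [IsProbabilityMeasure P] {X : Ω → ℝ} (hX : Measurable X) :
    ProbabilityMeasure ℝ :=
  ⟨Measure.map X P, Measure.isProbabilityMeasure_map hX.aemeasurable⟩

/-- The centered Gaussian distribution `N(0, σ²)` as a probability measure on `ℝ`. -/
noncomputable def gaussianPM (σ : ℝ) : ProbabilityMeasure ℝ :=
  ⟨gaussianReal 0 ⟨σ ^ 2, sq_nonneg σ⟩, instIsProbabilityMeasureGaussianReal _ _⟩

open Set Topology

theorem notMem_Icc_iInf_iSup_iff {ι : Type*} [Finite ι] [Nonempty ι] {y : ι → ℝ} {a : ℝ} :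
    a ∉ Icc (⨅ j, y j) (⨆ j, y j) ↔ (∀ j, a < y j) ∨ (∀ j, y j < a) := by
  obtain ⟨i, hi⟩ := exists_eq_ciInf_of_finite (f := y)
  obtain ⟨k, hk⟩ := exists_eq_ciSup_of_finite (f := y)
  rw [mem_Icc, not_and_or, not_le, not_le, ← hi, ← hk]
  refine or_congr ⟨fun h j => h.trans_le ?_, fun h => h i⟩
    ⟨fun h j => lt_of_le_of_lt ?_ h, fun h => h k⟩
  · exact hi ▸ ciInf_le (Finite.bddBelow_range y) j
  · exact hk ▸ le_ciSup (Finite.bddAbove_range y) j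

section Gaussian

variable {v : NNReal}

theorem gaussianReal_Iio_zero_eq_Ioi_zero :
    gaussianReal 0 v (Iio 0) = gaussianReal 0 v (Ioi 0) := by
  conv_lhs => rw [← neg_zero, ← gaussianReal_map_neg]
  rw [Measure.map_apply measurable_neg measurableSet_Iio, neg_preimage, neg_Iio, neg_neg]

theorem gaussianReal_real_Ioi_zero (hv : v ≠ 0) : (gaussianReal 0 v).real (Ioi 0) = 1 / 2 := by
  have := nullSingletonClass_gaussianReal (μ := 0) hv
  have hsum : (gaussianReal 0 v).real (Iio 0) + (gaussianReal 0 v).real (Ioi 0) = 1 := by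
    rw [← measureReal_union (Iio_disjoint_Ioi_of_le le_rfl) measurableSet_Ioi, Iio_union_Ioi,
      measureReal_compl (measurableSet_singleton 0), probReal_univ]
    simp [measureReal_def]
  rw [measureReal_def, gaussianReal_Iio_zero_eq_Ioi_zero, ← measureReal_def] at hsum
  linarith

theorem gaussianReal_real_Iio_zero (hv : v ≠ 0) : (gaussianReal 0 v).real (Iio 0) = 1 / 2 := by
  rw [measureReal_def, gaussianReal_Iio_zero_eq_Ioi_zero, ← measureReal_def,
    gaussianReal_real_Ioi_zero hv]

end Gaussian

theorem tendsto_measureReal_preimage_of_tendsto_law {Ω : Type*} [MeasurableSpace Ω]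
    {P : Measure Ω} [IsProbabilityMeasure P] {Y : ℕ → Ω → ℝ} (hY : ∀ T, Measurable (Y T))
    {μ : ProbabilityMeasure ℝ} (hlim : Tendsto (fun T => law P (hY T)) atTop (𝓝 μ))
    {E : Set ℝ} (hE : MeasurableSet E) (hfr : (μ : Measure ℝ) (frontier E) = 0) :
    Tendsto (fun T => P.real (Y T ⁻¹' E)) atTop (𝓝 ((μ : Measure ℝ).real E)) := by
  have h := ProbabilityMeasure.tendsto_measure_of_null_frontier_of_tendsto' hlim hfr
  refine (ENNReal.tendsto_toReal (measure_ne_top _ _)).comp h |>.congr fun T => ?_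
  simp only [Function.comp_apply, law, ProbabilityMeasure.coe_mk, Measure.map_apply (hY T) hE,
    measureReal_def]

section GaussianPM

variable {σ : ℝ}

theorem coe_gaussianPM : (gaussianPM σ : Measure ℝ) = gaussianReal 0 ⟨σ ^ 2, sq_nonneg σ⟩ := rfl

theorem gaussianPM_variance_ne_zero (hσ : σ ≠ 0) : (⟨σ ^ 2, sq_nonneg σ⟩ : NNReal) ≠ 0 :=
  fun h => hσ (pow_eq_zero_iff two_ne_zero |>.mp (congrArg NNReal.toReal h))

theorem gaussianPM_frontier_null (hσ : σ ≠ 0) {E : Set ℝ} (hE : frontier E ⊆ {0}) :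
    (gaussianPM σ : Measure ℝ) (frontier E) = 0 := by
  have := nullSingletonClass_gaussianReal (μ := 0) (gaussianPM_variance_ne_zero hσ)
  rw [coe_gaussianPM]
  exact measure_mono_null hE (measure_singleton 0)

end GaussianPM

section AsymptoticNormality

variable {Ω : Type*} [MeasurableSpace Ω] {P : Measure Ω} [IsProbabilityMeasure P]
  {X : ℕ → Ω → ℝ} {r : ℕ → ℝ} {θ₀ σ : ℝ}

theorem tendsto_measureReal_gt_of_tendsto_law_gaussianPM (hr : ∀ T, 0 < r T) (hσ : σ ≠ 0)
    (hY : ∀ T, Measurable fun ω => r T * (X T ω - θ₀))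
    (hlim : Tendsto (fun T => law P (hY T)) atTop (𝓝 (gaussianPM σ))) :
    Tendsto (fun T => P.real {ω | θ₀ < X T ω}) atTop (𝓝 (1 / 2)) := by
  have h := tendsto_measureReal_preimage_of_tendsto_law hY hlim measurableSet_Ioi
    (gaussianPM_frontier_null hσ (frontier_Ioi (a := (0 : ℝ))).subset)
  rw [coe_gaussianPM, gaussianReal_real_Ioi_zero (gaussianPM_variance_ne_zero hσ)] at h
  refine h.congr fun T => congrArg P.real (ext fun ω => ?_)
  simp [mul_pos_iff_of_pos_left (hr T)]

theorem tendsto_measureReal_lt_of_tendsto_law_gaussianPM (hr : ∀ T, 0 < r T) (hσ : σ ≠ 0)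
    (hY : ∀ T, Measurable fun ω => r T * (X T ω - θ₀))
    (hlim : Tendsto (fun T => law P (hY T)) atTop (𝓝 (gaussianPM σ))) :
    Tendsto (fun T => P.real {ω | X T ω < θ₀}) atTop (𝓝 (1 / 2)) := by
  have h := tendsto_measureReal_preimage_of_tendsto_law hY hlim measurableSet_Iio
    (gaussianPM_frontier_null hσ (frontier_Iio (a := (0 : ℝ))).subset)
  rw [coe_gaussianPM, gaussianReal_real_Iio_zero (gaussianPM_variance_ne_zero hσ)] at h
  refine h.congr fun T => congrArg P.real (ext fun ω => ?_)
  simp [mul_neg_iff, hr T, (hr T).not_gt]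

end AsymptoticNormality

section Independence

variable {Ω : Type*} [MeasurableSpace Ω] {P : Measure Ω}

theorem tendsto_measureReal_forall_mem_of_iIndepFun {ι β : Type*} [Fintype ι] [MeasurableSpace β]
    {X : ℕ → ι → Ω → β} (hind : ∀ T, iIndepFun (X T) P) {A : Set β} (hA : MeasurableSet A)
    {p : ι → ℝ} (hlim : ∀ j, Tendsto (fun T => P.real (X T j ⁻¹' A)) atTop (𝓝 (p j))) :
    Tendsto (fun T => P.real {ω | ∀ j, X T j ω ∈ A}) atTop (𝓝 (∏ j, p j)) := by
  refine (tendsto_finsetProd _ fun j _ => hlim j).congr fun T => ?_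
  have hinter : {ω | ∀ j, X T j ω ∈ A} = ⋂ j, X T j ⁻¹' A := ofPred_forall _
  rw [hinter, measureReal_def, (hind T).meas_iInter fun j => ⟨A, hA, rfl⟩, ENNReal.toReal_prod]
  rfl

theorem tendsto_measureReal_notMem_Icc_iInf_iSup [IsFiniteMeasure P] {ι : Type*} [Fintype ι]
    [Nonempty ι] {X : ℕ → ι → Ω → ℝ} (hX : ∀ T j, Measurable (X T j)) (hind : ∀ T, iIndepFun (X T) P)
    {a : ℝ} {p q : ι → ℝ}
    (hp : ∀ j, Tendsto (fun T => P.real {ω | a < X T j ω}) atTop (𝓝 (p j)))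
    (hq : ∀ j, Tendsto (fun T => P.real {ω | X T j ω < a}) atTop (𝓝 (q j))) :
    Tendsto (fun T => P.real {ω | a ∉ Icc (⨅ j, X T j ω) (⨆ j, X T j ω)}) atTop
      (𝓝 (∏ j, p j + ∏ j, q j)) := by
  have hsplit : ∀ T, {ω | a ∉ Icc (⨅ j, X T j ω) (⨆ j, X T j ω)} =
      {ω | ∀ j, X T j ω ∈ Ioi a} ∪ {ω | ∀ j, X T j ω ∈ Iio a} := fun T =>
    ext fun ω => notMem_Icc_iInf_iSup_iff
  have hdisj : ∀ T, Disjoint {ω | ∀ j, X T j ω ∈ Ioi a} {ω | ∀ j, X T j ω ∈ Iio a} := fun T =>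
    disjoint_left.mpr fun ω hgt hlt =>
      (hgt (Classical.arbitrary ι)).not_gt (hlt (Classical.arbitrary ι)).out
  have hmeas : ∀ T, MeasurableSet {ω | ∀ j, X T j ω ∈ Iio a} := fun T => by
    rw [ofPred_forall]
    exact .iInter fun j => hX T j measurableSet_Iio
  refine ((tendsto_measureReal_forall_mem_of_iIndepFun hind measurableSet_Ioi hp).add
    (tendsto_measureReal_forall_mem_of_iIndepFun hind measurableSet_Iio hq)).congr fun T => ?_
  rw [hsplit, measureReal_union (hdisj T) (hmeas T)]

end Independence

theorem measureReal_setOf_mem_eq_sum {Ω β : Type*} [MeasurableSpace Ω] {P : Measure Ω}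
    [IsFiniteMeasure P] [MeasurableSpace β] [MeasurableSingletonClass β] {N : Ω → β}
    (hN : Measurable N) {S : Finset β} (hNS : ∀ ω, N ω ∈ S) {E : β → Set Ω}
    (hE : ∀ b ∈ S, MeasurableSet (E b))
    (hind : ∀ b ∈ S, P (E b ∩ N ⁻¹' {b}) = P (E b) * P (N ⁻¹' {b})) :
    P.real {ω | ω ∈ E (N ω)} = ∑ b ∈ S, P.real (E b) * P.real (N ⁻¹' {b}) := by
  have hfibres : {ω | ω ∈ E (N ω)} = ⋃ b ∈ S, E b ∩ N ⁻¹' {b} := by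
    ext ω
    simp only [mem_ofPred_eq, mem_iUnion, mem_inter_iff, mem_preimage, mem_singleton_iff,
      exists_prop]
    exact ⟨fun h => ⟨N ω, hNS ω, h, rfl⟩, fun ⟨b, _, h, hb⟩ => hb ▸ h⟩
  have hdisj : PairwiseDisjoint (S : Set β) fun b => E b ∩ N ⁻¹' {b} := fun b _ c _ hbc =>
    ((disjoint_singleton.mpr hbc).preimage N).mono inter_subset_right inter_subset_right
  rw [hfibres, measureReal_biUnion_finset hdisj fun b hb => (hE b hb).inter (hN (.singleton b))]
  refine Finset.sum_congr rfl fun b hb => ?_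
  simp only [measureReal_def, hind b hb, ENNReal.toReal_mul]

theorem measurableSet_notMem_Icc_iInf_iSup {Ω ι : Type*} [MeasurableSpace Ω] [Countable ι]
    {X : ι → Ω → ℝ} (hX : ∀ j, Measurable (X j)) (a : ℝ) :
    MeasurableSet {ω | a ∉ Icc (⨅ j, X j ω) (⨆ j, X j ω)} :=
  ((measurableSet_le (.iInf hX) measurable_const).inter
    (measurableSet_le measurable_const (.iSup hX))).compl

section BucketCount

open Real

theorem one_le_logb_two_div {α : ℝ} (hα0 : 0 < α) (hα1 : α ≤ 1) : 1 ≤ logb 2 (2 / α) := by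
  rw [le_logb_iff_rpow_le one_lt_two (by positivity), rpow_one, le_div_iff₀ hα0]
  linarith

variable {b y : ℝ}

theorem pow_natFloor_logb_le (hb : 1 < b) (hy : 1 ≤ y) : b ^ ⌊logb b y⌋₊ ≤ y := by
  have hx : 0 ≤ logb b y := logb_nonneg hb hy
  calc b ^ ⌊logb b y⌋₊ = b ^ (⌊logb b y⌋₊ : ℝ) := (rpow_natCast b _).symm
    _ ≤ b ^ logb b y := rpow_le_rpow_of_exponent_le hb.le (Nat.floor_le hx)
    _ = y := rpow_logb (by linarith) hb.ne' (by linarith)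

theorem pow_natCeil_logb_eq_of_floor_eq_ceil (hb : 1 < b) (hy : 1 ≤ y)
    (h : ⌊logb b y⌋₊ = ⌈logb b y⌉₊) : b ^ ⌈logb b y⌉₊ = y := by
  have hx : 0 ≤ logb b y := logb_nonneg hb hy
  have hint : (⌈logb b y⌉₊ : ℝ) = logb b y :=
    le_antisymm (h ▸ Nat.floor_le hx) (Nat.le_ceil _)
  rw [← rpow_natCast, hint, rpow_logb (by linarith) hb.ne' (by linarith)]

end BucketCount

theorem two_mul_half_pow_mixture (n : ℕ) (α : ℝ) :
    2 * (1 / 2) ^ n * (1 - (2 - 2 ^ n * α)) + 2 * (1 / 2) ^ (n + 1) * (2 - 2 ^ n * α) = α := by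
  rw [one_div, inv_pow, inv_pow, pow_succ]
  field_simp
  ring

theorem sum_two_mul_half_pow_mul_measureReal_eq {Ω : Type*} [MeasurableSpace Ω]
    {P : Measure Ω} [IsProbabilityMeasure P] {α : ℝ} (hα0 : 0 < α) (hα1 : α ≤ 1) {B B' : ℕ}
    (hB : B = ⌈Real.logb 2 (2 / α)⌉₊) (hB' : B' = ⌊Real.logb 2 (2 / α)⌋₊)
    {Bstar : Ω → ℕ} (hBstarMeas : Measurable Bstar) (hBstarVals : ∀ ω, Bstar ω = B' ∨ Bstar ω = B)
    (hBstarLaw : P {ω | Bstar ω = B} = ENNReal.ofReal (2 - 2 ^ (B - 1) * α)) :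
    ∑ b ∈ {B', B}, 2 * (1 / 2) ^ b * P.real (Bstar ⁻¹' {b}) = α := by
  have hy : 1 ≤ 2 / α := by rw [le_div_iff₀ hα0]; linarith
  rcases eq_or_ne B' B with heq | hne
  · have hall : Bstar ⁻¹' {B} = univ :=
      eq_univ_of_forall fun ω => (hBstarVals ω).elim (fun h => h.trans heq) id
    have h2B : (2 : ℝ) ^ B = 2 / α := by
      subst hB hB'
      exact pow_natCeil_logb_eq_of_floor_eq_ceil one_lt_two hy heq
    rw [heq, Finset.insert_eq_of_mem (Finset.mem_singleton_self B), Finset.sum_singleton, hall,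
      probReal_univ, mul_one, one_div, inv_pow, h2B]
    field_simp
  · have hsucc : B = B' + 1 := by
      have := Nat.ceil_le_floor_add_one (Real.logb 2 (2 / α))
      have := Nat.floor_le_ceil (Real.logb 2 (2 / α))
      omega
    have h2B' : (2 : ℝ) ^ B' * α ≤ 2 := by
      rw [← le_div_iff₀ hα0]
      exact hB' ▸ pow_natFloor_logb_le one_lt_two hy
    subst hsucc
    have hPB : P.real (Bstar ⁻¹' {B' + 1}) = 2 - 2 ^ B' * α := by
      have hlaw : P (Bstar ⁻¹' {B' + 1}) = ENNReal.ofReal (2 - 2 ^ B' * α) := hBstarLaw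
      rw [measureReal_def, hlaw, ENNReal.toReal_ofReal (sub_nonneg.mpr h2B')]
    have hPB' : P.real (Bstar ⁻¹' {B'}) = 1 - P.real (Bstar ⁻¹' {B' + 1}) := by
      rw [← probReal_compl_eq_one_sub (hBstarMeas (.singleton _))]
      congr 1
      ext ω
      have := hBstarVals ω
      simp only [mem_preimage, mem_singleton_iff, mem_compl_iff]
      omega
    rw [Finset.sum_pair hne, hPB', hPB, two_mul_half_pow_mixture]

/-- asymptotic exactness of HulC under asymptotic normality.
With `B = ⌈log₂(2/α)⌉`, `B' = ⌊log₂(2/α)⌋`, a randomized bucket count `B*` with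
`P(B* = B) = 2 − 2^{B−1}α`, and for each `T` and `b ∈ {B', B}` estimators
`θ̂_T^{(b,1)}, …, θ̂_T^{(b,b)}` that are mutually independent, independent of `B*`,
and satisfy `r_{T,j}(θ̂_T^{(b,j)} − θ₀) → N(0, σ_j²)` in distribution, the HulC interval
misses `θ₀` with probability converging to `α`. -/
theorem hulc_asymptotic_exactness {Ω : Type*} [MeasurableSpace Ω]
    (P : Measure Ω) [IsProbabilityMeasure P]
    (α : ℝ) (hα0 : 0 < α) (hα1 : α ≤ 1)
    (B B' : ℕ) (hB : B = ⌈Real.logb 2 (2 / α)⌉₊) (hB' : B' = ⌊Real.logb 2 (2 / α)⌋₊)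
    (Bstar : Ω → ℕ) (hBstarMeas : Measurable Bstar)
    (hBstarVals : ∀ ω, Bstar ω = B' ∨ Bstar ω = B)
    (hBstarLaw : P {ω | Bstar ω = B} = ENNReal.ofReal (2 - 2 ^ (B - 1) * α))
    (θ₀ : ℝ)
    (θh : ℕ → (b : ℕ) → Fin b → Ω → ℝ)
    (hmeas : ∀ T b (j : Fin b), Measurable (θh T b j))
    (hindep : ∀ T, ∀ b : ℕ, b = B' ∨ b = B →
      iIndepFun (θh T b) P)
    (hindepBstar : ∀ T, ∀ b : ℕ, b = B' ∨ b = B →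
      IndepFun (fun ω => fun j : Fin b => θh T b j ω) Bstar P)
    (r : ℕ → ℕ → ℝ) (hr : ∀ T j, 0 < r T j)
    (σ : ℕ → ℝ) (hσ : ∀ j, 0 < σ j)
    (hconv : ∀ b : ℕ, b = B' ∨ b = B → ∀ j : Fin b,
      Tendsto
        (fun T => law P (X := fun ω => r T j.1 * (θh T b j ω - θ₀))
          (((hmeas T b j).sub measurable_const).const_mul (r T j.1)))
        atTop (nhds (gaussianPM (σ j.1)))) :
    Tendsto
      (fun T => (P {ω | θ₀ ∉ Set.Icc (⨅ j : Fin (Bstar ω), θh T (Bstar ω) j ω)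
          (⨆ j : Fin (Bstar ω), θh T (Bstar ω) j ω)}).toReal)
      atTop (nhds α) := by
  have hB'pos : 0 < B' := hB' ▸ Nat.floor_pos.mpr (one_le_logb_two_div hα0 hα1)
  have hbpos : ∀ b ∈ ({B', B} : Finset ℕ), 0 < b := by
    have : B' ≤ B := hB ▸ hB' ▸ Nat.floor_le_ceil _
    simp only [Finset.mem_insert, Finset.mem_singleton]
    rintro b (rfl | rfl) <;> omega
  have hlim : ∀ b ∈ ({B', B} : Finset ℕ), Tendsto
      (fun T => P.real {ω | θ₀ ∉ Icc (⨅ j : Fin b, θh T b j ω) (⨆ j, θh T b j ω)}) atTop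
      (𝓝 (2 * (1 / 2) ^ b)) := by
    intro b hb
    have hb' : b = B' ∨ b = B := by simpa using hb
    have : Nonempty (Fin b) := ⟨⟨0, hbpos b hb⟩⟩
    have h := tendsto_measureReal_notMem_Icc_iInf_iSup (hmeas · b) (hindep · b hb')
      (fun j => tendsto_measureReal_gt_of_tendsto_law_gaussianPM (hr · j) (hσ j).ne' _
        (hconv b hb' j))
      (fun j => tendsto_measureReal_lt_of_tendsto_law_gaussianPM (hr · j) (hσ j).ne' _
        (hconv b hb' j))
    simpa [Finset.prod_const, two_mul] using h
  have hmix : ∀ T, P.real {ω | θ₀ ∉ Icc (⨅ j : Fin (Bstar ω), θh T (Bstar ω) j ω)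
      (⨆ j : Fin (Bstar ω), θh T (Bstar ω) j ω)} = ∑ b ∈ {B', B},
        P.real {ω | θ₀ ∉ Icc (⨅ j : Fin b, θh T b j ω) (⨆ j, θh T b j ω)} *
          P.real (Bstar ⁻¹' {b}) := fun T =>
    measureReal_setOf_mem_eq_sum hBstarMeas (by simpa using hBstarVals)
      (fun b _ => measurableSet_notMem_Icc_iInf_iSup (hmeas T b) θ₀)
      (fun b hb => (hindepBstar T b (by simpa using hb)).measure_inter_preimage_eq_mul _ _
        (measurableSet_notMem_Icc_iInf_iSup measurable_pi_apply θ₀) (.singleton b))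
  rw [← sum_two_mul_half_pow_mul_measureReal_eq hα0 hα1 hB hB' hBstarMeas hBstarVals hBstarLaw]
  exact (tendsto_finsetSum _ fun b hb => (hlim b hb).mul_const _).congr fun T => (hmix T).symm
end

section
/- Let (Ω, 𝔉, P) be a probability space with a filtration (𝔉_t)_{t≥0}. Let (Δ_t)_{t≥0} be a nonnegative, adapted, integrable real-valued process, and for each t ≥ 1 let β_{t−1}, X_{t−1}, Z_{t−1} be nonnegative, 𝔉_{t−1}-measurable, integrable real-valued random variables satisfying, almost surely, E[Δ_t | 𝔉_{t−1}] ≤ (1 + β_{t−1}) Δ_{t−1} + Z_{t−1} − X_{t−1}. For ξ ∈ {0, 1} define R_0(ξ) := Δ_0 and, for t ≥ 1, R_t(ξ) := Δ_t · ∏_{s=1}^t (1 + β_{s−1})^{−1} − Σ_{s=1}^t (Z_{s−1} − ξ X_{s−1}) · ∏_{m=1}^s (1 + β_{m−1})^{−1}. Then for each ξ ∈ {0, 1}, the process (R_t(ξ))_{t≥0} is a supermartingale with respect to the filtration (𝔉_t)_{t≥0}. -/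
open MeasureTheory ProbabilityTheory Filter Finset

/-!
Discounting by `A t = ∏_{s < t} (1 + β s)⁻¹` absorbs the growth factor of the recursion, because
`A (t + 1) * (1 + β t) = A t` and `A (t + 1)` is already `𝔉 t`-measurable. Pulling it out of the
conditional expectation gives `E[A (t+1) Δ (t+1) | 𝔉 t] ≤ A t Δ t + A (t+1) (Z t - X t)`; subtracting
the predictable sum `∑_{s ≤ t} A (s+1) (Z s - ξ X s)` leaves the drift `-(1 - ξ) A (t+1) X t ≤ 0`.
-/

lemma MeasureTheory.condExp_mul_sub_of_stronglyMeasurable {Ω : Type*} {m m0 : MeasurableSpace Ω}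
    {μ : Measure Ω} (hm : m ≤ m0) [SigmaFinite (μ.trim hm)] {f g h : Ω → ℝ}
    (hg : StronglyMeasurable[m] g) (hh : StronglyMeasurable[m] h) (hf : Integrable f μ)
    (hfg : Integrable (f * g) μ) (hhi : Integrable h μ) :
    μ[f * g - h | m] =ᵐ[μ] μ[f | m] * g - h :=
  (condExp_sub hfg hhi m).trans <|
    (condExp_mul_of_stronglyMeasurable_right hg hfg hf).sub
      (condExp_of_stronglyMeasurable hm hh hhi).eventuallyEq

namespace RobbinsSiegmund

variable {Ω : Type*}

noncomputable def discount (β : ℕ → Ω → ℝ) (t : ℕ) (ω : Ω) : ℝ :=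
  (∏ s ∈ range t, (1 + β s ω))⁻¹

noncomputable def discountedSum (β Y : ℕ → Ω → ℝ) (t : ℕ) (ω : Ω) : ℝ :=
  ∑ s ∈ range t, Y s ω * discount β (s + 1) ω

variable {β Y : ℕ → Ω → ℝ} {t : ℕ} {ω : Ω}

lemma discount_nonneg (hβ : ∀ s, 0 ≤ β s ω) : 0 ≤ discount β t ω :=
  inv_nonneg.2 (prod_nonneg fun s _ => by linarith [hβ s])

lemma discount_le_one (hβ : ∀ s, 0 ≤ β s ω) : discount β t ω ≤ 1 :=
  inv_le_one_of_one_le₀ (one_le_prod fun s _ => le_add_of_nonneg_right (hβ s))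

lemma discount_succ_mul (hβ : 0 ≤ β t ω) :
    discount β (t + 1) ω * (1 + β t ω) = discount β t ω := by
  rw [discount, discount, prod_range_succ, mul_inv, mul_assoc,
    inv_mul_cancel₀ (by linarith), mul_one]

lemma discountedSum_succ :
    discountedSum β Y (t + 1) ω = discountedSum β Y t ω + Y t ω * discount β (t + 1) ω :=
  sum_range_succ _ _

lemma measurable_discount {m : MeasurableSpace Ω} (hβ : ∀ s < t, Measurable[m] (β s)) :
    Measurable[m] (discount β t) :=
  (Finset.measurable_prod _ fun s hs => measurable_const.add (hβ s (mem_range.1 hs))).inv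

lemma measurable_discountedSum {m : MeasurableSpace Ω} (hβ : ∀ s < t, Measurable[m] (β s))
    (hY : ∀ s < t, Measurable[m] (Y s)) : Measurable[m] (discountedSum β Y t) :=
  Finset.measurable_sum _ fun s hs => (hY s (mem_range.1 hs)).mul <|
    measurable_discount fun r hr => hβ r (by have := mem_range.1 hs; omega)

section Integrability

variable [MeasurableSpace Ω] {μ : Measure Ω}

lemma integrable_mul_discount {f : Ω → ℝ} (hf : Integrable f μ) (hβm : ∀ s, Measurable (β s))
    (hβ : ∀ s ω, 0 ≤ β s ω) : Integrable (fun ω => f ω * discount β t ω) μ :=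
  hf.mul_bdd (measurable_discount fun s _ => hβm s).aestronglyMeasurable <|
    ae_of_all _ fun ω => by
      rw [Real.norm_of_nonneg (discount_nonneg (hβ · ω))]
      exact discount_le_one (hβ · ω)

lemma integrable_discountedSum (hY : ∀ s, Integrable (Y s) μ) (hβm : ∀ s, Measurable (β s))
    (hβ : ∀ s ω, 0 ≤ β s ω) : Integrable (discountedSum β Y t) μ :=
  integrable_finsetSum _ fun s _ => integrable_mul_discount (hY s) hβm hβ

end Integrability

end RobbinsSiegmund

open RobbinsSiegmund

theorem robbins_siegmund_supermartingale_general {Ω : Type*} [m0 : MeasurableSpace Ω]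
    (P : Measure Ω) [IsProbabilityMeasure P]
    (F : Filtration ℕ m0)
    (Δ β X Z : ℕ → Ω → ℝ)
    (hΔadapted : Adapted F Δ)
    (hΔint : ∀ t, Integrable (Δ t) P)
    (hβadapted : Adapted F β) (hβnonneg : ∀ t ω, 0 ≤ β t ω)
    (hXadapted : Adapted F X) (hXnonneg : ∀ t ω, 0 ≤ X t ω)
    (hXint : ∀ t, Integrable (X t) P)
    (hZadapted : Adapted F Z)
    (hZint : ∀ t, Integrable (Z t) P)
    (hrec : ∀ t : ℕ, ∀ᵐ ω ∂P,
      (P[Δ (t + 1) | F t]) ω ≤ (1 + β t ω) * Δ t ω + Z t ω - X t ω)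
    (ξ : ℝ) (hξ : ξ = 0 ∨ ξ = 1)
    (R : ℕ → Ω → ℝ)
    (hR : ∀ t ω, R t ω =
      Δ t ω * (∏ s ∈ range t, (1 + β s ω))⁻¹ -
        ∑ s ∈ range t, (Z s ω - ξ * X s ω) * (∏ m ∈ range (s + 1), (1 + β m ω))⁻¹) :
    Supermartingale R F P := by
  set Y : ℕ → Ω → ℝ := fun s ω => Z s ω - ξ * X s ω
  have hRdef : ∀ t, R t = Δ t * discount β t - discountedSum β Y t := fun t => funext (hR t)
  have hYadapted : Adapted F Y := hZadapted.sub fun s => (hXadapted s).const_mul ξ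
  have hYint : ∀ s, Integrable (Y s) P := fun s => (hZint s).sub ((hXint s).const_mul ξ)
  have hβm : ∀ s, Measurable (β s) := fun s => hβadapted.measurable
  have hA : ∀ {n t}, t ≤ n + 1 → Measurable[F n] (discount β t) := fun ht =>
    measurable_discount fun s hs => hβadapted.measurable_le (by omega)
  have hS : ∀ {n t}, t ≤ n + 1 → Measurable[F n] (discountedSum β Y t) := fun ht =>
    measurable_discountedSum (fun s hs => hβadapted.measurable_le (by omega))
      (fun s hs => hYadapted.measurable_le (by omega))
  have hΔA : ∀ t, Integrable (Δ t * discount β t) P := fun t =>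
    integrable_mul_discount (hΔint t) hβm hβnonneg
  have hSint : ∀ t, Integrable (discountedSum β Y t) P := fun t =>
    integrable_discountedSum hYint hβm hβnonneg
  refine supermartingale_nat (fun t => ?_) (fun t => hRdef t ▸ (hΔA t).sub (hSint t)) fun t => ?_
  · rw [hRdef]
    exact ((hΔadapted t).mul (hA t.le_succ)).sub (hS t.le_succ) |>.stronglyMeasurable
  have hξ1 : ξ ≤ 1 := by rcases hξ with rfl | rfl <;> norm_num
  filter_upwards [hRdef (t + 1) ▸ condExp_mul_sub_of_stronglyMeasurable (F.le t)
    (hA le_rfl).stronglyMeasurable (hS le_rfl).stronglyMeasurable (hΔint (t + 1)) (hΔA (t + 1))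
    (hSint (t + 1)), hrec t] with ω hω hrecω
  rw [hω, hRdef]
  simp only [Pi.sub_apply, Pi.mul_apply, discountedSum_succ, ← discount_succ_mul (hβnonneg t ω)]
  have hA0 := discount_nonneg (t := t + 1) (hβnonneg · ω)
  nlinarith [mul_le_mul_of_nonneg_right hrecω hA0,
    mul_nonneg (mul_nonneg (sub_nonneg.2 hξ1) (hXnonneg t ω)) hA0]

/-- the discounted compensated process in the quantitative
Robbins–Siegmund argument is a supermartingale. -/
theorem robbins_siegmund_supermartingale {Ω : Type*} [m0 : MeasurableSpace Ω]
    (P : Measure Ω) [IsProbabilityMeasure P]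
    (F : Filtration ℕ m0)
    (Δ β X Z : ℕ → Ω → ℝ)
    (hΔadapted : Adapted F Δ) (hΔnonneg : ∀ t ω, 0 ≤ Δ t ω)
    (hΔint : ∀ t, Integrable (Δ t) P)
    (hβadapted : Adapted F β) (hβnonneg : ∀ t ω, 0 ≤ β t ω)
    (hβint : ∀ t, Integrable (β t) P)
    (hXadapted : Adapted F X) (hXnonneg : ∀ t ω, 0 ≤ X t ω)
    (hXint : ∀ t, Integrable (X t) P)
    (hZadapted : Adapted F Z) (hZnonneg : ∀ t ω, 0 ≤ Z t ω)
    (hZint : ∀ t, Integrable (Z t) P)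
    (hrec : ∀ t : ℕ, ∀ᵐ ω ∂P,
      (P[Δ (t + 1) | F t]) ω ≤ (1 + β t ω) * Δ t ω + Z t ω - X t ω)
    (ξ : ℝ) (hξ : ξ = 0 ∨ ξ = 1)
    (R : ℕ → Ω → ℝ)
    (hR : ∀ t ω, R t ω =
      Δ t ω * (∏ s ∈ range t, (1 + β s ω))⁻¹ -
        ∑ s ∈ range t, (Z s ω - ξ * X s ω) * (∏ m ∈ range (s + 1), (1 + β m ω))⁻¹) :
    Supermartingale R F P :=
  robbins_siegmund_supermartingale_general (m0 := m0) P F Δ β X Z hΔadapted hΔint hβadapted hβnonneg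
    hXadapted hXnonneg hXint hZadapted hZint hrec ξ hξ R hR
end
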